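/- arXiv:2604.10685 — 4 statements merged into one kernel-verified Lean document; each statement's English description precedes it below -/
import Mathlib

section
/- Information-theoretic client privacy of the blinded request: let p be a prime and G a finite group with Fintype.card G = p, and let g₀, g₁ : G with g₀ ≠ 1 and g₁ ≠ 1. Then the distribution of the blinded message g₀^{r} for r drawn uniformly from the units (ZMod p)ˣ equals the distribution of g₁^{r}: PMF.map (fun r : (ZMod p)ˣ => g₀ ^ ((r : ZMod p)).val) (PMF.uniformOfFintype (ZMod p)ˣ) = PMF.map (fun r : (ZMod p)ˣ => g₁ ^ ((r : ZMod p)).val) (PMF.uniformOfFintype (ZMod p)ˣ). Hence the message a = H1(x)^r sent by the Verifier in the 2HashDH OPRF is identically distributed for any two choices of claim input x, so the Holder learns nothing about which claim was queried from this message. -/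
lemma map_equiv_uniform {α β : Type*} [Fintype α] [Nonempty α] [Fintype β] [Nonempty β]
    (e : α ≃ β) :
    PMF.map e (PMF.uniformOfFintype α) = PMF.uniformOfFintype β := by
  ext b
  simp only [PMF.map_apply, PMF.uniformOfFintype_apply]
  rw [tsum_eq_single (e.symm b)]
  · simp [Fintype.card_congr e]
  · intro a ha
    rw [if_neg]
    intro h
    exact ha (by simp [h])

/-- Information-theoretic client privacy of the blinded request in 2HashDH:
for any two non-identity elements `g₀, g₁` (modelling `H1 x₀` and `H1 x₁`),
the blinded messages `g₀ ^ r` and `g₁ ^ r`, with `r` uniform over the units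
`(ZMod p)ˣ`, are identically distributed. -/
theorem blinded_request_client_privacy (p : ℕ) [Fact p.Prime] (G : Type*)
    [Group G] [Fintype G] (hG : Fintype.card G = p)
    (g₀ g₁ : G) (hg₀ : g₀ ≠ 1) (hg₁ : g₁ ≠ 1) :
    PMF.map (fun r : (ZMod p)ˣ => g₀ ^ ((r : ZMod p)).val)
        (PMF.uniformOfFintype (ZMod p)ˣ)
      = PMF.map (fun r : (ZMod p)ˣ => g₁ ^ ((r : ZMod p)).val)
        (PMF.uniformOfFintype (ZMod p)ˣ) := by
  have hp := (Fact.out : p.Prime)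
  have hord : orderOf g₀ = p := by
    have hdvd : orderOf g₀ ∣ p := hG ▸ orderOf_dvd_card
    rcases hp.eq_one_or_self_of_dvd _ hdvd with h | h
    · exact absurd (orderOf_eq_one_iff.mp h) hg₀
    · exact h
  -- g₁ is a power of g₀
  have hmem : g₁ ∈ Submonoid.powers g₀ := by
    rw [mem_powers_iff_mem_zpowers]
    have : Subgroup.zpowers g₀ = ⊤ := by
      apply Subgroup.eq_top_of_card_eq
      rw [Nat.card_zpowers, hord, Nat.card_eq_fintype_card, hG]
    rw [this]; trivial
  obtain ⟨k, hk'⟩ := hmem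
  have hk : g₀ ^ k = g₁ := hk'
  haveI : NeZero p := ⟨hp.ne_zero⟩
  have hkz : (k : ZMod p) ≠ 0 := by
    intro h
    have : p ∣ k := (ZMod.natCast_eq_zero_iff _ _).mp h
    have : g₀ ^ k = 1 := orderOf_dvd_iff_pow_eq_one.mp (hord ▸ this)
    exact hg₁ (hk ▸ this)
  let u : (ZMod p)ˣ := Units.mk0 (k : ZMod p) hkz
  have hu : (u : ZMod p).val = k % p := by
    simp [u, ZMod.val_natCast]
  have hgu : g₀ ^ ((u : ZMod p)).val = g₁ := by
    rw [hu, ← hk]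
    conv_rhs => rw [← pow_mod_orderOf]
    rw [hord]
  have key : ∀ r : (ZMod p)ˣ,
      g₀ ^ (((u * r : (ZMod p)ˣ) : ZMod p)).val = g₁ ^ ((r : ZMod p)).val := by
    intro r
    rw [← hgu, ← pow_mul]
    have : (((u * r : (ZMod p)ˣ) : ZMod p)).val = ((u : ZMod p).val * (r : ZMod p).val) % p := by
      rw [Units.val_mul, ZMod.val_mul]
    rw [this]
    conv_rhs => rw [← pow_mod_orderOf]
    rw [hord]
  calc PMF.map (fun r : (ZMod p)ˣ => g₀ ^ ((r : ZMod p)).val)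
        (PMF.uniformOfFintype (ZMod p)ˣ)
      = PMF.map (fun r : (ZMod p)ˣ => g₀ ^ ((r : ZMod p)).val)
        (PMF.map (Equiv.mulLeft u) (PMF.uniformOfFintype (ZMod p)ˣ)) := by
        rw [map_equiv_uniform]
    _ = PMF.map (fun r : (ZMod p)ˣ => g₁ ^ ((r : ZMod p)).val)
        (PMF.uniformOfFintype (ZMod p)ˣ) := by
        rw [PMF.map_comp]
        congr 1
        funext r
        simpa using key r
end

section
/- Transcript independence against an arbitrarily misbehaving server: let p be a prime and G a finite group with Fintype.card G = p, let g₀, g₁ : G with g₀ ≠ 1 and g₁ ≠ 1, and let f : G → G be an arbitrary function modelling the (possibly malicious) Holder's response strategy. Then the joint distribution of the full protocol transcript (a, f a) with a = g₀^{r} and r uniform over the units (ZMod p)ˣ equals the joint distribution of (a, f a) with a = g₁^{r}: PMF.map (fun r : (ZMod p)ˣ => (g₀ ^ ((r:ZMod p)).val, f (g₀ ^ ((r:ZMod p)).val))) (PMF.uniformOfFintype (ZMod p)ˣ) = PMF.map (fun r : (ZMod p)ˣ => (g₁ ^ ((r:ZMod p)).val, f (g₁ ^ ((r:ZMod p)).val)))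 (PMF.uniformOfFintype (ZMod p)ˣ). Hence the Holder's entire view of one OPRF execution is identically distributed regardless of which claim the Verifier queried. -/
lemma map_perm_uniform {α : Type*} [Fintype α] [Nonempty α] (e : α ≃ α) :
    PMF.map (⇑e) (PMF.uniformOfFintype α) = PMF.uniformOfFintype α := by
  ext a
  rw [PMF.map_apply]
  rw [tsum_eq_single (e.symm a) (fun b hb => by
    simp only [ite_eq_right_iff]
    intro h; exact absurd (by rw [h]; simp) hb)]
  simp

/-- Transcript independence against an arbitrarily misbehaving server: for any
response strategy `f : G → G` of the (possibly malicious) Holder, the joint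
distribution of the transcript `(a, f a)` with `a = g₀ ^ r`, `r` uniform over
the units `(ZMod p)ˣ`, equals that with `a = g₁ ^ r`, for any two non-identity
elements `g₀, g₁` (modelling `H1 x₀` and `H1 x₁`). -/
theorem transcript_independence (p : ℕ) [Fact p.Prime] (G : Type*)
    [Group G] [Fintype G] (hG : Fintype.card G = p)
    (g₀ g₁ : G) (hg₀ : g₀ ≠ 1) (hg₁ : g₁ ≠ 1) (f : G → G) :
    PMF.map
        (fun r : (ZMod p)ˣ =>
          (g₀ ^ ((r : ZMod p)).val, f (g₀ ^ ((r : ZMod p)).val)))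
        (PMF.uniformOfFintype (ZMod p)ˣ)
      = PMF.map
        (fun r : (ZMod p)ˣ =>
          (g₁ ^ ((r : ZMod p)).val, f (g₁ ^ ((r : ZMod p)).val)))
        (PMF.uniformOfFintype (ZMod p)ˣ) := by
  have hp : p.Prime := Fact.out
  have hord : orderOf g₀ = p := by
    have hd : orderOf g₀ ∣ p := hG ▸ orderOf_dvd_card
    rcases (Nat.Prime.eq_one_or_self_of_dvd hp _ hd) with h | h
    · exact absurd (orderOf_eq_one_iff.mp h) hg₀
    · exact h
  -- g₀ generates G
  have htop : Subgroup.zpowers g₀ = ⊤ := by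
    apply Subgroup.eq_top_of_card_eq
    rw [Nat.card_zpowers, hord, Nat.card_eq_fintype_card, hG]
  obtain ⟨n, hn⟩ := mem_powers_iff_mem_zpowers.mpr (htop ▸ Subgroup.mem_top g₁)
  have hn' : g₀ ^ n = g₁ := hn
  have hpm : ∀ k, g₀ ^ (k % p) = g₀ ^ k := fun k => by
    rw [← hord]; exact pow_mod_orderOf g₀ k
  -- the exponent as a unit of ZMod p
  have hm : (n : ZMod p) ≠ 0 := by
    intro h
    apply hg₁
    rw [← hn', ← hpm, ← ZMod.val_natCast, h, ZMod.val_zero, pow_zero]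
  haveI : NeZero p := ⟨hp.ne_zero⟩
  set u : (ZMod p)ˣ := Units.mk0 ((n : ZMod p) : ZMod p) hm with hu
  have hpow : ∀ r : (ZMod p)ˣ,
      g₁ ^ ((r : ZMod p)).val = g₀ ^ (((u * r : (ZMod p)ˣ) : ZMod p)).val := by
    intro r
    have h1 : g₁ = g₀ ^ ((n : ZMod p)).val := by
      rw [ZMod.val_natCast, hpm, hn']
    have huv : ((u : ZMod p)).val = ((n : ZMod p)).val := rfl
    rw [h1, ← pow_mul, Units.val_mul, ZMod.val_mul, huv, hpm]
  have key : (fun r : (ZMod p)ˣ =>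
      (g₁ ^ ((r : ZMod p)).val, f (g₁ ^ ((r : ZMod p)).val)))
      = (fun r : (ZMod p)ˣ =>
      (g₀ ^ ((r : ZMod p)).val, f (g₀ ^ ((r : ZMod p)).val))) ∘ ⇑(Equiv.mulLeft u) := by
    funext r
    simp [hpow r]
  rw [key, ← PMF.map_comp, map_perm_uniform]
end

section
/- The server's response to a blinded request leaks nothing about the master key: let p be a prime and G a finite group with Fintype.card G = p, let g : G with g ≠ 1, and let k₀, k₁ : (ZMod p)ˣ be two nonzero master keys. Then the distribution of the response b = (g^{r})^{k₀} for r uniform over the units (ZMod p)ˣ equals the distribution of (g^{r})^{k₁}: PMF.map (fun r : (ZMod p)ˣ => (g ^ ((r:ZMod p)).val) ^ ((k₀ : ZMod p)).val) (PMF.uniformOfFintype (ZMod p)ˣ) = PMF.map (fun r : (ZMod p)ˣ => (g ^ ((r:ZMod p)).val) ^ ((k₁ : ZMod p)).val) (PMF.uniformOfFintype (ZMod p)ˣ). -/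
lemma uniform_map_equiv {α : Type*} [Fintype α] [Nonempty α] (e : α ≃ α) :
    PMF.map e (PMF.uniformOfFintype α) = PMF.uniformOfFintype α := by
  classical
  ext b
  rw [PMF.map_apply, tsum_eq_single (e.symm b) (by
    intro a h
    simp only [ite_eq_right_iff]
    intro hb
    exact absurd (by simp [hb]) h)]
  simp

/-- The server's response to a blinded request leaks nothing about the master
key: for a non-identity `g` in a group of prime order `p` and any two nonzero
master keys `k₀, k₁`, the responses `(g ^ r) ^ k₀` and `(g ^ r) ^ k₁`, with
`r` uniform over the units `(ZMod p)ˣ`, are identically distributed. -/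
theorem response_hides_master_key (p : ℕ) [Fact p.Prime] (G : Type*)
    [Group G] [Fintype G] (hG : Fintype.card G = p)
    (g : G) (hg : g ≠ 1) (k₀ k₁ : (ZMod p)ˣ) :
    PMF.map
        (fun r : (ZMod p)ˣ => (g ^ ((r : ZMod p)).val) ^ ((k₀ : ZMod p)).val)
        (PMF.uniformOfFintype (ZMod p)ˣ)
      = PMF.map
        (fun r : (ZMod p)ˣ => (g ^ ((r : ZMod p)).val) ^ ((k₁ : ZMod p)).val)
        (PMF.uniformOfFintype (ZMod p)ˣ) := by
  have hp : p.Prime := Fact.out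
  have horder : orderOf g = p := by
    have hdvd : orderOf g ∣ p := hG ▸ orderOf_dvd_card
    rcases (hp.eq_one_or_self_of_dvd _ hdvd) with h | h
    · exact absurd (orderOf_eq_one_iff.mp h) hg
    · exact h
  have key : ∀ k : (ZMod p)ˣ,
      PMF.map
        (fun r : (ZMod p)ˣ => (g ^ ((r : ZMod p)).val) ^ ((k : ZMod p)).val)
        (PMF.uniformOfFintype (ZMod p)ˣ)
      = PMF.map (fun r : (ZMod p)ˣ => g ^ ((r : ZMod p)).val)
        (PMF.uniformOfFintype (ZMod p)ˣ) := by
    intro k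
    have hfun : (fun r : (ZMod p)ˣ => (g ^ ((r : ZMod p)).val) ^ ((k : ZMod p)).val)
        = (fun r : (ZMod p)ˣ => g ^ ((r : ZMod p)).val) ∘ (Equiv.mulRight k) := by
      funext r
      simp only [Function.comp_apply, Equiv.coe_mulRight, ← pow_mul]
      rw [← pow_mod_orderOf, horder]
      congr 1
      rw [Units.val_mul, ZMod.val_mul]
    rw [hfun, ← PMF.map_comp, uniform_map_equiv]
  rw [key k₀, key k₁]
end

section
/- Determinism of the randomized OPRF evaluation: let p be a prime, G a finite group with Fintype.card G = p, X and Y types, H1 : X → G, H2 : X → G → Y, x : X an input, and k : ZMod p a master key. Then the distribution of the client's output over a uniformly random blinding factor is a point mass at the directly derived key: PMF.map (fun r : (ZMod p)ˣ => H2 x ((((H1 x) ^ ((r:ZMod p)).val) ^ k.val) ^ (((r⁻¹ : (ZMod p)ˣ) : ZMod p)).val)) (PMF.uniformOfFintype (ZMod p)ˣ) = PMF.pure (H2 x ((H1 x) ^ k.val)). -/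
/-- Determinism of the randomized 2HashDH OPRF evaluation: the distribution of
the client's output over a uniformly random blinding factor `r` is a point
mass at the directly derived key `F_k(x) = H2 x ((H1 x) ^ k)`. -/
theorem oprf_eval_deterministic (p : ℕ) [Fact p.Prime] (G : Type*)
    [Group G] [Fintype G] (hG : Fintype.card G = p)
    (X Y : Type*) (H1 : X → G) (H2 : X → G → Y) (x : X) (k : ZMod p) :
    PMF.map
        (fun r : (ZMod p)ˣ =>
          H2 x ((((H1 x) ^ ((r : ZMod p)).val) ^ k.val)
            ^ (((r⁻¹ : (ZMod p)ˣ) : ZMod p)).val))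
        (PMF.uniformOfFintype (ZMod p)ˣ)
      = PMF.pure (H2 x ((H1 x) ^ k.val)) := by
  have hfun : (fun r : (ZMod p)ˣ =>
      H2 x ((((H1 x) ^ ((r : ZMod p)).val) ^ k.val)
        ^ (((r⁻¹ : (ZMod p)ˣ) : ZMod p)).val)) =
      fun _ => H2 x ((H1 x) ^ k.val) := by
    funext r
    congr 1
    rw [← pow_mul, ← pow_mul]
    have horder : orderOf (H1 x) ∣ p := hG ▸ orderOf_dvd_card
    rw [pow_eq_pow_iff_modEq]
    refine Nat.ModEq.of_dvd horder ?_
    rw [← ZMod.natCast_eq_natCast_iff]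
    push_cast [ZMod.natCast_val, ZMod.cast_id]
    rw [mul_comm k, ← mul_assoc, mul_inv_cancel₀ (r.ne_zero), one_mul]
  rw [hfun]
  exact PMF.map_const _ _
end
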